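/- arXiv:math/0306033 — 4 statements merged into one kernel-verified Lean document; each statement's English description precedes it below -/
import Mathlib

section
/- Let ℓ > 1 and p ≥ 2, and let E be a continuous injective map from [0,1] into ℝ with E(0) = 1. Define H(x) := |E(x)|^ℓ for x ∈ [0,1] and g(x) := E(|x|^ℓ) for x ∈ [−1,1], and assume H maps [0,1] into [0,1] and g maps [−1,1] into [−1,1]. Suppose there is a real number α with |α| > 1 such that α·g^p(x) = g(α·x) whenever |x| ≤ |α|⁻¹, and set τ := |α|^ℓ. Then for every n ≥ 0 and every x ∈ [0,1] one has g^{pⁿ}(E(τ⁻ⁿ·x)) = E(τ⁻ⁿ·H(x)); equivalently, H = Λₙ⁻¹ ∘ g^{pⁿ} ∘ Λₙ on [0,1], where Λₙ(x) := E(τ⁻ⁿ·x). -/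
/-!
Write `x = |u|^ℓ` with `u ∈ [-1,1]`. Since `τ⁻ⁿ·|w|^ℓ = |α⁻ⁿ·w|^ℓ`, we get
`E(τ⁻ⁿ·x) = g(α⁻ⁿ·u)` and `E(τ⁻ⁿ·H x) = g(α⁻ⁿ·g u)`, so the claim reduces to
`g^{pⁿ}(α⁻ⁿ·v) = α⁻ⁿ·g v` on `[-1,1]`. This follows by induction on `n` from the functional
equation in the form `g^p(α⁻¹·v) = α⁻¹·g v`, whose `m`-fold iterate is `g^{pm}(α⁻¹·v) = α⁻¹·g^m v`.
-/

open Set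

theorem Set.MapsTo.iterate_semiconj_apply {α β : Type*} {s : Set α} {g : α → α} {f : β → β}
    {c : α → β} (hg : MapsTo g s s) (h : ∀ y ∈ s, f (c y) = c (g y)) (m : ℕ) :
    ∀ y ∈ s, f^[m] (c y) = c (g^[m] y) := by
  induction m with
  | zero => simp
  | succ m ih =>
    intro y hy
    rw [Function.iterate_succ_apply, h y hy, ih (g y) (hg hy), Function.iterate_succ_apply]

theorem exists_mem_Icc_abs_rpow_eq {ℓ x : ℝ} (hℓ : 0 < ℓ) (hx : x ∈ Icc (0 : ℝ) 1) :
    ∃ u ∈ Icc (-1 : ℝ) 1, |u| ^ ℓ = x := by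
  have hu₀ : 0 ≤ x ^ ℓ⁻¹ := Real.rpow_nonneg hx.1 _
  refine ⟨x ^ ℓ⁻¹, ⟨by linarith, Real.rpow_le_one hx.1 hx.2 (inv_nonneg.2 hℓ.le)⟩, ?_⟩
  rw [abs_of_nonneg hu₀, Real.rpow_inv_rpow hx.1 hℓ.ne']

theorem inv_pow_mul_mem_Icc {a v : ℝ} (ha : 1 ≤ |a|) (hv : v ∈ Icc (-1 : ℝ) 1) (n : ℕ) :
    a⁻¹ ^ n * v ∈ Icc (-1 : ℝ) 1 := by
  rw [mem_Icc, ← abs_le, abs_mul, abs_pow, abs_inv]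
  exact mul_le_one₀ (pow_le_one₀ (by positivity) (inv_le_one_of_one_le₀ ha)) (abs_nonneg v)
    (abs_le.2 hv)

theorem inv_rpow_pow_mul_abs_rpow (a w ℓ : ℝ) (n : ℕ) :
    (|a| ^ ℓ)⁻¹ ^ n * |w| ^ ℓ = |a⁻¹ ^ n * w| ^ ℓ := by
  rw [abs_mul, abs_pow, abs_inv, Real.mul_rpow (by positivity) (abs_nonneg w),
    ← Real.rpow_pow_comm (by positivity), Real.inv_rpow (abs_nonneg a)]

section FunctionalEquation

variable {g : ℝ → ℝ} {α : ℝ} {p : ℕ}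

theorem iterate_inv_mul_of_functional_eq (hα₀ : α ≠ 0)
    (hfun : ∀ x : ℝ, |x| ≤ |α|⁻¹ → α * g^[p] x = g (α * x))
    {v : ℝ} (hv : v ∈ Icc (-1 : ℝ) 1) : g^[p] (α⁻¹ * v) = α⁻¹ * g v := by
  have hsmall : |α⁻¹ * v| ≤ |α|⁻¹ := by
    rw [abs_mul, abs_inv]
    exact mul_le_of_le_one_right (by positivity) (abs_le.2 hv)
  have hscaled := hfun _ hsmall
  rw [mul_inv_cancel_left₀ hα₀] at hscaled
  rw [← hscaled, inv_mul_cancel_left₀ hα₀]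

theorem iterate_pow_inv_pow_mul (hα : 1 ≤ |α|)
    (hgmaps : MapsTo g (Icc (-1 : ℝ) 1) (Icc (-1 : ℝ) 1))
    (hfun : ∀ x : ℝ, |x| ≤ |α|⁻¹ → α * g^[p] x = g (α * x)) (n : ℕ) :
    ∀ v ∈ Icc (-1 : ℝ) 1, g^[p ^ n] (α⁻¹ ^ n * v) = α⁻¹ ^ n * g v := by
  have hα₀ : α ≠ 0 := abs_pos.1 (zero_lt_one.trans_le hα)
  induction n with
  | zero => simp
  | succ n ih =>
    intro v hv
    have hstep := hgmaps.iterate_semiconj_apply (f := g^[p]) (c := (α⁻¹ * ·))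
      (fun y hy => iterate_inv_mul_of_functional_eq hα₀ hfun hy) (p ^ n)
    rw [pow_succ', Function.iterate_mul, pow_succ', mul_assoc,
      hstep _ (inv_pow_mul_mem_Icc hα hv n), ih v hv, mul_assoc]

end FunctionalEquation

theorem statement5_general (ℓ : ℝ) (hℓ : 1 < ℓ) (p : ℕ)
    (E H g : ℝ → ℝ) (α τ : ℝ)
    (hH : ∀ x ∈ Icc (0:ℝ) 1, H x = |E x| ^ ℓ)
    (hg : ∀ x ∈ Icc (-1:ℝ) 1, g x = E (|x| ^ ℓ))
    (hgmaps : MapsTo g (Icc (-1:ℝ) 1) (Icc (-1:ℝ) 1))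
    (hα : 1 < |α|)
    (hfun : ∀ x : ℝ, |x| ≤ |α|⁻¹ → α * g^[p] x = g (α * x))
    (hτ : τ = |α| ^ ℓ) :
    ∀ (n : ℕ), ∀ x ∈ Icc (0:ℝ) 1,
      g^[p ^ n] (E (τ⁻¹ ^ n * x)) = E (τ⁻¹ ^ n * H x) := by
  intro n x hx
  obtain ⟨u, hu, rfl⟩ := exists_mem_Icc_abs_rpow_eq (zero_lt_one.trans hℓ) hx
  have hΛ : ∀ w ∈ Icc (-1 : ℝ) 1, E (τ⁻¹ ^ n * |w| ^ ℓ) = g (α⁻¹ ^ n * w) := fun w hw => by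
    rw [hτ, inv_rpow_pow_mul_abs_rpow, hg _ (inv_pow_mul_mem_Icc hα.le hw n)]
  have hHu : H (|u| ^ ℓ) = |g u| ^ ℓ := by rw [hH _ hx, hg u hu]
  calc g^[p ^ n] (E (τ⁻¹ ^ n * |u| ^ ℓ))
      = g (g^[p ^ n] (α⁻¹ ^ n * u)) := by
        rw [hΛ u hu, (Function.Commute.self_iterate g (p ^ n)).eq]
    _ = g (α⁻¹ ^ n * g u) := by rw [iterate_pow_inv_pow_mul hα.le hgmaps hfun n u hu]
    _ = E (τ⁻¹ ^ n * H (|u| ^ ℓ)) := by rw [hHu, hΛ _ (hgmaps hu)]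

/-- If `H(x) = |E(x)|^ℓ` on `[0,1]`, `g(x) = E(|x|^ℓ)` on `[-1,1]`, and
`α·g^p(x) = g(α·x)` for `|x| ≤ |α|⁻¹` with `|α| > 1`, then with `τ = |α|^ℓ` one has the
identity `g^[pⁿ] (E (τ⁻ⁿ·x)) = E (τ⁻ⁿ·H(x))` for every `n ≥ 0` and `x ∈ [0,1]`;
equivalently `H = Λₙ⁻¹ ∘ g^[pⁿ] ∘ Λₙ` on `[0,1]` where `Λₙ(x) = E(τ⁻ⁿ·x)`. -/
theorem statement5 (ℓ : ℝ) (hℓ : 1 < ℓ) (p : ℕ) (hp : 2 ≤ p)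
    (E H g : ℝ → ℝ) (α τ : ℝ)
    (hEcont : ContinuousOn E (Icc 0 1)) (hEinj : InjOn E (Icc 0 1))
    (hE0 : E 0 = 1)
    (hH : ∀ x ∈ Icc (0:ℝ) 1, H x = |E x| ^ ℓ)
    (hg : ∀ x ∈ Icc (-1:ℝ) 1, g x = E (|x| ^ ℓ))
    (hHmaps : MapsTo H (Icc 0 1) (Icc 0 1))
    (hgmaps : MapsTo g (Icc (-1:ℝ) 1) (Icc (-1:ℝ) 1))
    (hα : 1 < |α|)
    (hfun : ∀ x : ℝ, |x| ≤ |α|⁻¹ → α * g^[p] x = g (α * x))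
    (hτ : τ = |α| ^ ℓ) :
    ∀ (n : ℕ), ∀ x ∈ Icc (0:ℝ) 1,
      g^[p ^ n] (E (τ⁻¹ ^ n * x)) = E (τ⁻¹ ^ n * H x) :=
  statement5_general ℓ hℓ p E H g α τ hH hg hgmaps hα hfun hτ
end

section
/- Let x₀ ∈ ℝ, τ > 0, ℓ > 0, A > 0 and δ > 0. Suppose H : (x₀ − δ, x₀ + δ) → ℝ satisfies |H(x₀ + h)| = A·|h|^ℓ + o(|h|^ℓ) as h → 0, and G is a map from a neighborhood of x₀ into (x₀ − δ, x₀ + δ) which is differentiable at x₀ with G(x₀) = x₀, and such that τ⁻¹·H(x) = H(G(x)) for all x in a neighborhood of x₀. Then |G'(x₀)| = τ^{−1/ℓ}. -/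
open Set Filter Topology Asymptotics

/-!
Put `K h = G (x₀ + h) - x₀`, so `|K h| / |h| → |g|` and `K = O(h)`. Substituting `K h` for `h`
in the expansion of `|H|` gives `|H (x₀ + K h)| = A |K h|^ℓ + o(|h|^ℓ)`, while the functional
equation gives `|H (x₀ + K h)| = τ⁻¹ |H (x₀ + h)| = τ⁻¹ A |h|^ℓ + o(|h|^ℓ)`. Dividing by `|h|^ℓ`
and letting `h → 0` yields `A |g|^ℓ = τ⁻¹ A`.
-/

theorem HasDerivAt.tendsto_abs_sub_div_abs {f : ℝ → ℝ} {f' x : ℝ} (hf : HasDerivAt f f' x) :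
    Tendsto (fun h => |f (x + h) - f x| / |h|) (𝓝[≠] 0) (𝓝 |f'|) := by
  simpa [abs_mul, div_eq_inv_mul] using (hasDerivAt_iff_tendsto_slope_zero.mp hf).abs

theorem tendsto_div_of_isLittleO_sub {α : Type*} {l : Filter α} {u w v : α → ℝ} {a : ℝ}
    (huw : (fun x => u x - w x) =o[l] v) (hw : Tendsto (fun x => w x / v x) l (𝓝 a)) :
    Tendsto (fun x => u x / v x) l (𝓝 a) := by
  simpa [sub_div] using hw.add huw.tendsto_div_nhds_zero

theorem isLittleO_comp_sub_mul_abs_rpow {α : Type*} {l : Filter α} {k m : α → ℝ} {A ℓ : ℝ}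
    (hℓ : 0 ≤ ℓ) {u : ℝ → ℝ}
    (hu : (fun h => u h - A * |h| ^ ℓ) =o[𝓝 0] fun h => |h| ^ ℓ)
    (hm : Tendsto m l (𝓝 0)) (hk : k =O[l] m) :
    (fun x => u (k x) - A * |k x| ^ ℓ) =o[l] fun x => |m x| ^ ℓ :=
  (hu.comp_tendsto (hk.trans_tendsto hm)).trans_isBigO
    (hk.abs_abs.rpow hℓ (Eventually.of_forall fun _ => abs_nonneg _))

theorem statement8_general (x₀ τ ℓ A : ℝ) (hτ : 0 < τ) (hℓ : 0 < ℓ) (hA : 0 < A)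
    (H G : ℝ → ℝ) (g : ℝ)
    (hH : (fun h : ℝ => |H (x₀ + h)| - A * |h| ^ ℓ) =o[nhds (0:ℝ)] fun h : ℝ => |h| ^ ℓ)
    (hGd : HasDerivAt G g x₀) (hGfix : G x₀ = x₀)
    (hfun : ∀ᶠ x in nhds x₀, τ⁻¹ * H x = H (G x)) :
    |g| = τ ^ (-(1/ℓ)) := by
  set K : ℝ → ℝ := fun h => G (x₀ + h) - G x₀
  have hshift : Tendsto (fun h : ℝ => x₀ + h) (𝓝 0) (𝓝 x₀) := by
    simpa using tendsto_const_nhds.add (tendsto_id (x := 𝓝 (0 : ℝ)))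
  have hpow_ne : ∀ᶠ h : ℝ in 𝓝[≠] 0, |h| ^ ℓ ≠ 0 := by
    filter_upwards [self_mem_nhdsWithin] with h hh
    exact (Real.rpow_pos_of_pos (abs_pos.mpr hh) ℓ).ne'
  have hratio : Tendsto (fun h => |H (x₀ + h)| / |h| ^ ℓ) (𝓝[≠] 0) (𝓝 A) := by
    refine tendsto_div_of_isLittleO_sub (hH.mono nhdsWithin_le_nhds) ?_
    refine tendsto_const_nhds.congr' ?_
    filter_upwards [hpow_ne] with h hh
    field_simp
  have hKO : K =O[𝓝 0] id := by
    show (fun h => G (x₀ + h) - G x₀) =O[𝓝 0] fun h => h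
    simpa [Function.comp_def] using hGd.isBigO_sub.comp_tendsto hshift
  have hcomp := isLittleO_comp_sub_mul_abs_rpow hℓ.le hH tendsto_id hKO
  have hfe : ∀ᶠ h in 𝓝 0, |H (x₀ + K h)| = τ⁻¹ * |H (x₀ + h)| := by
    filter_upwards [hshift.eventually hfun] with h hh
    simp only [K, hGfix, add_sub_cancel, ← hh, abs_mul, abs_of_pos (inv_pos.mpr hτ)]
  have hcomp' : (fun h => A * |K h| ^ ℓ - τ⁻¹ * |H (x₀ + h)|) =o[𝓝[≠] 0] fun h => |h| ^ ℓ := by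
    refine (hcomp.neg_left.mono nhdsWithin_le_nhds).congr' ?_ EventuallyEq.rfl
    filter_upwards [nhdsWithin_le_nhds hfe] with h hh
    rw [hh, neg_sub]
  have hlim₁ : Tendsto (fun h => A * |K h| ^ ℓ / |h| ^ ℓ) (𝓝[≠] 0) (𝓝 (τ⁻¹ * A)) :=
    tendsto_div_of_isLittleO_sub hcomp' <| by simpa only [mul_div_assoc] using hratio.const_mul τ⁻¹
  have hlim₂ : Tendsto (fun h => A * |K h| ^ ℓ / |h| ^ ℓ) (𝓝[≠] 0) (𝓝 (A * |g| ^ ℓ)) := by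
    refine ((hGd.tendsto_abs_sub_div_abs.rpow_const (Or.inr hℓ.le)).const_mul A).congr fun h => ?_
    rw [Real.div_rpow (abs_nonneg _) (abs_nonneg _), mul_div_assoc]
  have hgτ : |g| ^ ℓ = τ⁻¹ :=
    mul_left_cancel₀ hA.ne' (by linarith [tendsto_nhds_unique hlim₂ hlim₁])
  rw [one_div, Real.rpow_neg hτ.le, ← Real.inv_rpow hτ.le, Real.eq_rpow_inv (abs_nonneg _)
    (inv_nonneg.mpr hτ.le) hℓ.ne']
  exact hgτ

/-- If `|H(x₀+h)| = A·|h|^ℓ + o(|h|^ℓ)` as `h → 0`, `G` fixes `x₀`, is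
differentiable there with derivative `g`, maps a neighborhood of `x₀` into `(x₀-δ, x₀+δ)`,
and `τ⁻¹·H(x) = H(G(x))` near `x₀`, then `|G'(x₀)| = τ^{-1/ℓ}`. -/
theorem statement8 (x₀ τ ℓ A δ : ℝ) (hτ : 0 < τ) (hℓ : 0 < ℓ) (hA : 0 < A) (hδ : 0 < δ)
    (H G : ℝ → ℝ) (g : ℝ)
    (hH : (fun h : ℝ => |H (x₀ + h)| - A * |h| ^ ℓ) =o[nhds (0:ℝ)] fun h : ℝ => |h| ^ ℓ)
    (hGmaps : ∀ᶠ x in nhds x₀, G x ∈ Ioo (x₀ - δ) (x₀ + δ))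
    (hGd : HasDerivAt G g x₀) (hGfix : G x₀ = x₀)
    (hfun : ∀ᶠ x in nhds x₀, τ⁻¹ * H x = H (G x)) :
    |g| = τ ^ (-(1/ℓ)) :=
  statement8_general x₀ τ ℓ A hτ hℓ hA H G g hH hGd hGfix hfun
end

section
/- Suppose g is real-analytic at 0 with power-series expansion g(x) = x − ε·x³ + O(|x|⁴) where ε > 0. Let a₂ < 0 < a₁ be two real points in the basin of attraction of 0, i.e. gⁿ(aᵢ) is defined and nonzero for every n ≥ 0 and gⁿ(aᵢ) → 0 as n → ∞, for i = 1, 2. Then there exists K > 0 such that for every n ≥ 0: K ≤ |gⁿ(a₂)|/|gⁿ(a₁)| ≤ K⁻¹. -/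
open Filter Topology Asymptotics

/-!
Along an orbit `xₙ → 0` of `g(x) = x - εx³ + O(x⁴)`, the quantity `1/xₙ²` grows by
`2ε + o(1)` at each step, so by Cesàro `n · xₙ² → 1/(2ε)` whatever the starting point.
Hence `|gⁿ(a₂)|/|gⁿ(a₁)| → 1`, and a positive sequence with a positive limit is bounded
above and away from zero.
-/

theorem tendsto_sub_div_cube_of_isBigO {g : ℝ → ℝ} {ε : ℝ}
    (hexp : (fun x : ℝ => g x - (x - ε * x ^ 3)) =O[𝓝 0] fun x : ℝ => |x| ^ 4) :
    Tendsto (fun x => (x - g x) / x ^ 3) (𝓝[≠] 0) (𝓝 ε) := by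
  have hrem : Tendsto (fun x => (g x - (x - ε * x ^ 3)) / x ^ 3) (𝓝 0) (𝓝 0) := by
    refine (hexp.trans_isLittleO ?_).tendsto_div_nhds_zero
    simpa only [abs_pow] using (isLittleO_pow_pow (𝕜 := ℝ) (by norm_num : 3 < 4)).abs_left
  have hlim : Tendsto (fun x => ε - (g x - (x - ε * x ^ 3)) / x ^ 3) (𝓝[≠] 0) (𝓝 ε) := by
    simpa using (tendsto_const_nhds.sub hrem).mono_left nhdsWithin_le_nhds
  refine hlim.congr' ?_
  filter_upwards [self_mem_nhdsWithin] with x (hx : x ≠ 0)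
  field_simp
  ring

theorem tendsto_inv_sq_sub_inv_sq {g : ℝ → ℝ} {ε : ℝ}
    (hg : Tendsto (fun x => (x - g x) / x ^ 3) (𝓝[≠] 0) (𝓝 ε)) :
    Tendsto (fun x => (g x ^ 2)⁻¹ - (x ^ 2)⁻¹) (𝓝[≠] 0) (𝓝 (2 * ε)) := by
  have hsq : Tendsto (fun x : ℝ => x ^ 2) (𝓝[≠] 0) (𝓝 0) := by
    simpa using ((continuous_pow 2).tendsto (0 : ℝ)).mono_left nhdsWithin_le_nhds
  have hratio : Tendsto (fun x => g x / x) (𝓝[≠] 0) (𝓝 1) := by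
    have := tendsto_const_nhds (x := (1 : ℝ)).sub (hsq.mul hg)
    rw [zero_mul, sub_zero] at this
    refine this.congr' ?_
    filter_upwards [self_mem_nhdsWithin] with x (hx : x ≠ 0)
    field_simp
    ring
  have hlim : Tendsto (fun x => (x - g x) / x ^ 3 * (1 + g x / x) / (g x / x) ^ 2) (𝓝[≠] 0)
      (𝓝 (2 * ε)) := by
    have := (hg.mul (tendsto_const_nhds (x := (1 : ℝ)).add hratio)).div (hratio.pow 2)
      (by norm_num)
    rwa [one_pow, div_one, one_add_one_eq_two, mul_comm] at this
  -- `1/g² - 1/x² = (x - g)(x + g)/(x²g²)`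
  refine hlim.congr' ?_
  filter_upwards [self_mem_nhdsWithin, hratio.eventually_ne one_ne_zero]
    with x (hx : x ≠ 0) hratio_ne
  have hgx : g x ≠ 0 := fun h => hratio_ne (by simp [h])
  field_simp
  ring

theorem tendsto_div_natCast_of_tendsto_sub {u : ℕ → ℝ} {c : ℝ}
    (h : Tendsto (fun n => u (n + 1) - u n) atTop (𝓝 c)) :
    Tendsto (fun n => u n / n) atTop (𝓝 c) := by
  have hcesaro := h.cesaro
  simp only [Finset.sum_range_sub u] at hcesaro
  have hinit : Tendsto (fun n : ℕ => (n : ℝ)⁻¹ * u 0) atTop (𝓝 0) := by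
    simpa using tendsto_inv_atTop_nhds_zero_nat.mul_const (u 0)
  simpa [div_eq_inv_mul, mul_sub] using hcesaro.add hinit

theorem tendsto_natCast_mul_sq_iterate {g : ℝ → ℝ} {c : ℝ} (hc : c ≠ 0)
    (hg : Tendsto (fun x => (g x ^ 2)⁻¹ - (x ^ 2)⁻¹) (𝓝[≠] 0) (𝓝 c)) {a : ℝ}
    (hne : ∀ n : ℕ, g^[n] a ≠ 0) (hlim : Tendsto (fun n : ℕ => g^[n] a) atTop (𝓝 0)) :
    Tendsto (fun n : ℕ => (n : ℝ) * (g^[n] a) ^ 2) atTop (𝓝 c⁻¹) := by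
  have horbit : Tendsto (fun n : ℕ => g^[n] a) atTop (𝓝[≠] 0) :=
    tendsto_nhdsWithin_of_tendsto_nhds_of_eventually_within _ hlim (Eventually.of_forall hne)
  have hstep : Tendsto (fun n => ((g^[n + 1] a) ^ 2)⁻¹ - ((g^[n] a) ^ 2)⁻¹) atTop (𝓝 c) := by
    simpa only [Function.comp_def, Function.iterate_succ_apply'] using hg.comp horbit
  simpa using (tendsto_div_natCast_of_tendsto_sub (u := fun n => ((g^[n] a) ^ 2)⁻¹) hstep).inv₀ hc

theorem tendsto_abs_div_abs_of_tendsto_natCast_mul_sq {u v : ℕ → ℝ} {L : ℝ} (hL : L ≠ 0)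
    (hu : Tendsto (fun n : ℕ => (n : ℝ) * u n ^ 2) atTop (𝓝 L))
    (hv : Tendsto (fun n : ℕ => (n : ℝ) * v n ^ 2) atTop (𝓝 L)) :
    Tendsto (fun n => |u n| / |v n|) atTop (𝓝 1) := by
  have hsq : Tendsto (fun n => u n ^ 2 / v n ^ 2) atTop (𝓝 1) := by
    rw [← div_self hL]
    refine (hu.div hv hL).congr' ?_
    filter_upwards [eventually_ne_atTop 0] with n hn
    exact mul_div_mul_left _ _ (Nat.cast_ne_zero.2 hn)
  simpa [Function.comp_def, Real.sqrt_div' _ (sq_nonneg _), Real.sqrt_sq_eq_abs] using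
    (Real.continuous_sqrt.tendsto 1).comp hsq

theorem exists_pos_le_and_le_inv_of_tendsto {r : ℕ → ℝ} {l : ℝ} (hr : ∀ n, 0 < r n)
    (hl : 0 < l) (h : Tendsto r atTop (𝓝 l)) :
    ∃ K : ℝ, 0 < K ∧ ∀ n, K ≤ r n ∧ r n ≤ K⁻¹ := by
  obtain ⟨B, hB⟩ := h.bddAbove_range
  obtain ⟨B', hB'⟩ := (h.inv₀ hl.ne').bddAbove_range
  refine ⟨(max 1 (max B B'))⁻¹, by positivity, fun n => ⟨?_, ?_⟩⟩
  · rw [inv_le_comm₀ (by positivity) (hr n)]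
    exact (hB' ⟨n, rfl⟩).trans ((le_max_right _ _).trans (le_max_right _ _))
  · rw [inv_inv]
    exact (hB ⟨n, rfl⟩).trans ((le_max_left _ _).trans (le_max_right _ _))

theorem statement16_general (g : ℝ → ℝ) (ε : ℝ) (hε : 0 < ε)
    (hexp : (fun x : ℝ => g x - (x - ε * x ^ 3)) =O[nhds (0:ℝ)] fun x : ℝ => |x| ^ 4)
    (a₁ a₂ : ℝ)
    (hb₁ : (∀ n : ℕ, g^[n] a₁ ≠ 0) ∧
      Filter.Tendsto (fun n : ℕ => g^[n] a₁) Filter.atTop (nhds 0))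
    (hb₂ : (∀ n : ℕ, g^[n] a₂ ≠ 0) ∧
      Filter.Tendsto (fun n : ℕ => g^[n] a₂) Filter.atTop (nhds 0)) :
    ∃ K : ℝ, 0 < K ∧ ∀ n : ℕ,
      K ≤ |g^[n] a₂| / |g^[n] a₁| ∧ |g^[n] a₂| / |g^[n] a₁| ≤ K⁻¹ := by
  have h2ε : 2 * ε ≠ 0 := by positivity
  have hstep := tendsto_inv_sq_sub_inv_sq (tendsto_sub_div_cube_of_isBigO hexp)
  have h₁ := tendsto_natCast_mul_sq_iterate h2ε hstep hb₁.1 hb₁.2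
  have h₂ := tendsto_natCast_mul_sq_iterate h2ε hstep hb₂.1 hb₂.2
  exact exists_pos_le_and_le_inv_of_tendsto
    (fun n => div_pos (abs_pos.2 (hb₂.1 n)) (abs_pos.2 (hb₁.1 n))) one_pos
    (tendsto_abs_div_abs_of_tendsto_natCast_mul_sq (inv_ne_zero h2ε) h₂ h₁)

/-- (Comparison of Fatou coordinates on both sides of a parabolic point.)
If `g(x) = x - ε·x³ + O(|x|⁴)` with `ε > 0` and `a₂ < 0 < a₁` both lie in the basin of
attraction of `0`, then the ratios `|gⁿ(a₂)|/|gⁿ(a₁)|` are bounded above and below by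
positive constants, uniformly in `n`. -/
theorem statement16 (g : ℝ → ℝ) (ε : ℝ) (hε : 0 < ε)
    (hg : AnalyticAt ℝ g 0)
    (hexp : (fun x : ℝ => g x - (x - ε * x ^ 3)) =O[nhds (0:ℝ)] fun x : ℝ => |x| ^ 4)
    (a₁ a₂ : ℝ) (ha₂ : a₂ < 0) (ha₁ : 0 < a₁)
    (hb₁ : (∀ n : ℕ, g^[n] a₁ ≠ 0) ∧
      Filter.Tendsto (fun n : ℕ => g^[n] a₁) Filter.atTop (nhds 0))
    (hb₂ : (∀ n : ℕ, g^[n] a₂ ≠ 0) ∧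
      Filter.Tendsto (fun n : ℕ => g^[n] a₂) Filter.atTop (nhds 0)) :
    ∃ K : ℝ, 0 < K ∧ ∀ n : ℕ,
      K ≤ |g^[n] a₂| / |g^[n] a₁| ∧ |g^[n] a₂| / |g^[n] a₁| ≤ K⁻¹ :=
  statement16_general g ε hε hexp a₁ a₂ hb₁ hb₂
end

section
/- Suppose g is real-analytic at 0 with power-series expansion g(x) = x − ε·x³ + O(|x|⁴) where ε > 0, and a ≠ 0 is a real point in the basin of attraction of 0, i.e. gⁿ(a) is defined and nonzero for every n ≥ 0 and gⁿ(a) → 0 as n → ∞. Then lim_{n→∞} n·(gⁿ(a))² = 1/(2ε). -/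
open Set Filter Topology Asymptotics

/-- (Parabolic asymptotics.)  If `g(x) = x - ε·x³ + O(|x|⁴)` with `ε > 0`
and `a ≠ 0` lies in the basin of attraction of `0`, then `n·(gⁿ(a))² → 1/(2ε)`. -/
theorem statement17 (g : ℝ → ℝ) (ε : ℝ) (hε : 0 < ε)
    (hg : AnalyticAt ℝ g 0)
    (hexp : (fun x : ℝ => g x - (x - ε * x ^ 3)) =O[nhds (0:ℝ)] fun x : ℝ => |x| ^ 4)
    (a : ℝ) (ha : a ≠ 0)
    (hbasin : (∀ n : ℕ, g^[n] a ≠ 0) ∧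
      Filter.Tendsto (fun n : ℕ => g^[n] a) Filter.atTop (nhds 0)) :
    Filter.Tendsto (fun n : ℕ => (n : ℝ) * (g^[n] a) ^ 2) Filter.atTop
      (nhds (1 / (2 * ε))) := by
  obtain ⟨hne, hlim⟩ := hbasin
  set s : ℝ → ℝ := fun x => (g x - (x - ε * x ^ 3)) / x ^ 3 with hs_def
  set q : ℝ → ℝ := fun x => g x / x with hq_def
  rw [Asymptotics.isBigO_iff] at hexp
  obtain ⟨C, hC⟩ := hexp
  have hs : Tendsto s (𝓝[≠] (0:ℝ)) (𝓝 0) := by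
    apply squeeze_zero_norm' (a := fun x => C * |x|)
    · filter_upwards [nhdsWithin_le_nhds hC, self_mem_nhdsWithin] with x hx hx0
      have hx0 : x ≠ 0 := hx0
      have h3 : (0:ℝ) < |x| ^ 3 := by positivity
      simp only [hs_def, Real.norm_eq_abs, abs_div, abs_pow] at hx ⊢
      rw [div_le_iff₀ h3]
      calc |g x - (x - ε * x ^ 3)| ≤ C * |x| ^ 4 := by simpa using hx
        _ = C * |x| * |x| ^ 3 := by ring
    · have : Tendsto (fun x : ℝ => C * |x|) (𝓝 0) (𝓝 (C * |0|)) :=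
        (continuous_const.mul continuous_abs).tendsto 0
      simpa using this.mono_left nhdsWithin_le_nhds
  have hx0 : Tendsto (fun x : ℝ => x) (𝓝[≠] (0:ℝ)) (𝓝 0) :=
    tendsto_id.mono_left nhdsWithin_le_nhds
  have hqeq : ∀ᶠ x in 𝓝[≠] (0:ℝ), q x = 1 - ε * x ^ 2 + x ^ 2 * s x := by
    filter_upwards [self_mem_nhdsWithin] with x hx
    have hx : x ≠ 0 := hx
    simp only [hq_def, hs_def]
    field_simp
    ring
  have hq : Tendsto q (𝓝[≠] (0:ℝ)) (𝓝 1) := by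
    have h1 : Tendsto (fun x : ℝ => 1 - ε * x ^ 2 + x ^ 2 * s x) (𝓝[≠] (0:ℝ))
        (𝓝 (1 - ε * 0 ^ 2 + 0 ^ 2 * 0)) :=
      (tendsto_const_nhds.sub (tendsto_const_nhds.mul (hx0.pow 2))).add ((hx0.pow 2).mul hs)
    exact Tendsto.congr' (Filter.EventuallyEq.symm hqeq) (by simpa using h1)
  -- the key local limit
  have hφ : Tendsto (fun x => 1 / (g x) ^ 2 - 1 / x ^ 2) (𝓝[≠] (0:ℝ)) (𝓝 (2 * ε)) := by
    have hF : Tendsto (fun x => (ε - s x) * (1 + q x) / (q x) ^ 2) (𝓝[≠] (0:ℝ))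
        (𝓝 ((ε - 0) * (1 + 1) / 1 ^ 2)) :=
      ((tendsto_const_nhds.sub hs).mul (tendsto_const_nhds.add hq)).div (hq.pow 2) (by norm_num)
    have hq1 : ∀ᶠ x in 𝓝[≠] (0:ℝ), q x ≠ 0 := hq.eventually_ne one_ne_zero
    have heq : ∀ᶠ x in 𝓝[≠] (0:ℝ),
        (ε - s x) * (1 + q x) / (q x) ^ 2 = 1 / (g x) ^ 2 - 1 / x ^ 2 := by
      filter_upwards [self_mem_nhdsWithin, hq1] with x hx hqx
      have hx : x ≠ 0 := hx
      have hgx : g x ≠ 0 := by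
        intro h
        apply hqx
        simp [hq_def, h]
      simp only [hs_def, hq_def]
      field_simp
      ring
    have := Tendsto.congr' heq hF
    convert this using 2
    ring
  -- pass to the sequence
  have hxseq : Tendsto (fun n : ℕ => g^[n] a) atTop (𝓝[≠] (0:ℝ)) := by
    apply tendsto_nhdsWithin_of_tendsto_nhds_of_eventually_within _ hlim
    exact Eventually.of_forall fun n => hne n
  set u : ℕ → ℝ := fun n => 1 / (g^[n] a) ^ 2 with hu_def
  have hd : Tendsto (fun n : ℕ => u (n + 1) - u n) atTop (𝓝 (2 * ε)) := by
    have := hφ.comp hxseq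
    apply this.congr
    intro n
    simp only [Function.comp_apply, hu_def, Function.iterate_succ_apply']
  have hces := hd.cesaro
  have htel : ∀ n : ℕ, ∑ i ∈ Finset.range n, (u (i + 1) - u i) = u n - u 0 :=
    fun n => Finset.sum_range_sub u n
  have h1 : Tendsto (fun n : ℕ => (n : ℝ)⁻¹ * (u n - u 0)) atTop (𝓝 (2 * ε)) := by
    apply hces.congr
    intro n
    rw [htel n]
  have h2 : Tendsto (fun n : ℕ => (n : ℝ)⁻¹ * u n) atTop (𝓝 (2 * ε)) := by
    have hz : Tendsto (fun n : ℕ => (n : ℝ)⁻¹ * u 0) atTop (𝓝 0) := by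
      simpa using tendsto_inv_atTop_nhds_zero_nat.mul_const (u 0)
    have := h1.add hz
    simp only [add_zero] at this
    apply this.congr
    intro n
    ring
  have h3 : Tendsto (fun n : ℕ => ((n : ℝ)⁻¹ * u n)⁻¹) atTop (𝓝 (2 * ε)⁻¹) :=
    h2.inv₀ (by positivity)
  rw [one_div]
  apply h3.congr'
  filter_upwards [eventually_ge_atTop 1] with n hn
  have hn0 : (n : ℝ) ≠ 0 := Nat.cast_ne_zero.mpr (by omega)
  have hxn : g^[n] a ≠ 0 := hne n
  simp only [hu_def]
  field_simp
end
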